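/- Let t be a binary planar tree. For each rooted subtree z ∈ E_t, let f(t,z) be the unique forest with t = f(t,z) ∘ z, and let P(t,z) be the tuple of path words of f(t,z) in F₂ (path from the root of the tree of f(t,z) containing a given leaf of t to that leaf, a left turn multiplying by a on the left, a right turn by b). Then the map z ↦ P(t,z) from E_t to tuples of elements of F₂ is injective. -/

import Mathlib

/-- Binary planar trees. -/
inductive BTree
  | leaf : BTree
  | node : BTree → BTree → BTree
deriving DecidableEq

namespace BTree

/-- The free group F₂ = ⟨a,b⟩. -/
abbrev F2 := FreeGroup (Fin 2)

def a : F2 := FreeGroup.of 0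
def b : F2 := FreeGroup.of 1

/-- Path words of a binary planar tree, indexed by its leaves from left to right:
`P(leaf) = e`, `P(t₁ • t₂)_i = P(t₁)_i · a` on leaves of `t₁`, `P(t₂)_i · b` on leaves of `t₂`. -/
def pathWords : BTree → List F2
  | leaf => [1]
  | node l r => (pathWords l).map (· * a) ++ (pathWords r).map (· * b)

/-- The list of rooted subtrees of `t` (containing the root of `t`). -/
def rootedSubtrees : BTree → List BTree
  | leaf => [leaf]
  | node l r =>
      leaf :: (rootedSubtrees l).flatMap (fun z₁ => (rootedSubtrees r).map (node z₁))

/-- `P(t,z)`: the tuple of path words of the forest `f(t,z)` obtained by cutting `t` along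
the leaves of the rooted subtree `z` (so that `t = f(t,z) ∘ z`); each word is computed
within the tree of `f(t,z)` containing the given leaf of `t`. -/
def cutWords : BTree → BTree → List F2
  | t, leaf => pathWords t
  | node t₁ t₂, node z₁ z₂ => cutWords t₁ z₁ ++ cutWords t₂ z₂
  | leaf, node _ _ => []

end BTree

open BTree

/-!
Cutting `t = node l r` along a non-trivial rooted subtree `node z₁ z₂` splits the words into
those of `(l, z₁)` followed by those of `(r, z₂)`, a block of exactly `numLeaves l` words, so
injectivity follows by induction once the cut at `leaf` is told apart from every other cut.
For that, look at the leftmost leaf: its word in `f(t, z)` is `a ^ (leftDepth t - leftDepth z)`,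
and `a` has infinite order in the free group.
-/

namespace BTree

def numLeaves : BTree → ℕ
  | leaf => 1
  | node l r => numLeaves l + numLeaves r

def leftDepth : BTree → ℕ
  | leaf => 0
  | node l _ => leftDepth l + 1

theorem mem_rootedSubtrees_leaf {z : BTree} : z ∈ rootedSubtrees leaf ↔ z = leaf := by
  simp [rootedSubtrees]

theorem mem_rootedSubtrees_node {l r z : BTree} :
    z ∈ rootedSubtrees (node l r) ↔
      z = leaf ∨ ∃ z₁ ∈ rootedSubtrees l, ∃ z₂ ∈ rootedSubtrees r, z = node z₁ z₂ := by
  simp [rootedSubtrees, eq_comm]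

theorem length_pathWords (t : BTree) : (pathWords t).length = numLeaves t := by
  induction t with
  | leaf => rfl
  | node l r hl hr => simp [pathWords, numLeaves, hl, hr]

theorem length_cutWords {t z : BTree} (hz : z ∈ rootedSubtrees t) :
    (cutWords t z).length = numLeaves t := by
  induction t generalizing z with
  | leaf => rw [mem_rootedSubtrees_leaf.mp hz]; rfl
  | node l r hl hr =>
    rcases mem_rootedSubtrees_node.mp hz with rfl | ⟨z₁, hz₁, z₂, hz₂, rfl⟩
    · exact length_pathWords _
    · simp [cutWords, numLeaves, hl hz₁, hr hz₂]

theorem head?_pathWords (t : BTree) : (pathWords t).head? = some (a ^ leftDepth t) := by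
  induction t with
  | leaf => rfl
  | node l r hl _ => simp [pathWords, leftDepth, hl, pow_succ]

theorem head?_cutWords {t z : BTree} (hz : z ∈ rootedSubtrees t) :
    (cutWords t z).head? = some (a ^ (leftDepth t - leftDepth z)) := by
  induction t generalizing z with
  | leaf => rw [mem_rootedSubtrees_leaf.mp hz]; rfl
  | node l r hl _ =>
    rcases mem_rootedSubtrees_node.mp hz with rfl | ⟨z₁, hz₁, z₂, hz₂, rfl⟩
    · exact head?_pathWords _
    · simp [cutWords, leftDepth, hl hz₁]

theorem pow_a_injective : Function.Injective (a ^ · : ℕ → F2) :=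
  injective_pow_iff_not_isOfFinOrder.mpr
    (not_isOfFinOrder_of_isMulTorsionFree (FreeGroup.of_ne_one _))

theorem cutWords_node_ne_pathWords {l r z₁ z₂ : BTree}
    (hz₁ : z₁ ∈ rootedSubtrees l) (hz₂ : z₂ ∈ rootedSubtrees r) :
    cutWords (node l r) (node z₁ z₂) ≠ pathWords (node l r) := by
  intro h
  have hz : node z₁ z₂ ∈ rootedSubtrees (node l r) :=
    mem_rootedSubtrees_node.mpr (.inr ⟨z₁, hz₁, z₂, hz₂, rfl⟩)
  have hhead := congrArg List.head? h
  rw [head?_cutWords hz, head?_pathWords, Option.some_inj] at hhead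
  have := pow_a_injective hhead
  simp only [leftDepth] at this
  omega

end BTree

/-- The map `z ↦ P(t,z)` from the rooted subtrees of `t` to tuples of elements of `F₂`
is injective. -/
theorem stmt11 (t : BTree) :
    ∀ z₁ ∈ rootedSubtrees t, ∀ z₂ ∈ rootedSubtrees t,
      cutWords t z₁ = cutWords t z₂ → z₁ = z₂ := by
  induction t with
  | leaf =>
    intro z₁ hz₁ z₂ hz₂ _
    rw [mem_rootedSubtrees_leaf.mp hz₁, mem_rootedSubtrees_leaf.mp hz₂]
  | node l r hl hr =>
    intro z₁ hz₁ z₂ hz₂ h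
    rcases mem_rootedSubtrees_node.mp hz₁ with rfl | ⟨u₁, hu₁, u₂, hu₂, rfl⟩ <;>
      rcases mem_rootedSubtrees_node.mp hz₂ with rfl | ⟨v₁, hv₁, v₂, hv₂, rfl⟩
    · rfl
    · exact absurd h.symm (cutWords_node_ne_pathWords hv₁ hv₂)
    · exact absurd h (cutWords_node_ne_pathWords hu₁ hu₂)
    · have hlen : (cutWords l u₁).length = (cutWords l v₁).length := by
        rw [length_cutWords hu₁, length_cutWords hv₁]
      obtain ⟨h₁, h₂⟩ := List.append_inj h hlen
      rw [hl u₁ hu₁ v₁ hv₁ h₁, hr u₂ hu₂ v₂ hv₂ h₂]
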